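/- arXiv:1510.09072 — 4 statements merged into one kernel-verified Lean document; each statement's English description precedes it below -/
import Mathlib

section
/- A Bernoulli distribution p on {0,1}^d is palindromic if and only if all its odd-order linear (moment) interactions vanish, i.e., ξ_b := Σ_{a ∈ {0,1}^d} (-1)^{a·b} p(a) = 0 for all b ∈ {0,1}^d with |b| odd, where a·b denotes the inner product and |b| = Σ_v b_v. -/
open Finset

/-- `(-1)^(a·b)` where `a·b` is the inner product of binary vectors. -/
noncomputable def sgn {d : ℕ} (a b : Fin d → Bool) : ℝ :=
  ∏ v : Fin d, (if a v && b v then (-1 : ℝ) else 1)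

/-- `|b|`, the number of ones in the binary vector `b`. -/
def wt {d : ℕ} (b : Fin d → Bool) : ℕ :=
  (univ.filter (fun v => b v = true)).card

def bcompl {d : ℕ} (a : Fin d → Bool) : Fin d → Bool := fun v => !a v

lemma neg_one_pow_wt {d : ℕ} (b : Fin d → Bool) :
    ((-1 : ℝ)) ^ (wt b) = ∏ v : Fin d, (if b v then (-1 : ℝ) else 1) := by
  rw [wt, ← Finset.prod_const, Finset.prod_filter]

lemma sgn_bcompl {d : ℕ} (a b : Fin d → Bool) :
    sgn (bcompl a) b = (-1 : ℝ) ^ (wt b) * sgn a b := by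
  rw [neg_one_pow_wt, sgn, sgn, ← Finset.prod_mul_distrib]
  apply Finset.prod_congr rfl
  intro v _
  cases ha : a v <;> cases hb : b v <;> simp [bcompl, ha, hb]

lemma bcompl_bcompl {d : ℕ} (a : Fin d → Bool) : bcompl (bcompl a) = a := by
  funext v; simp [bcompl]

lemma sgn_orth {d : ℕ} (a c : Fin d → Bool) :
    ∑ b : Fin d → Bool, sgn a b * sgn c b = if a = c then (2 : ℝ) ^ d else 0 := by
  have h1 : ∀ b : Fin d → Bool, sgn a b * sgn c b =
      ∏ v : Fin d, ((if a v && b v then (-1 : ℝ) else 1) *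
        (if c v && b v then (-1 : ℝ) else 1)) := by
    intro b; rw [sgn, sgn, ← Finset.prod_mul_distrib]
  simp only [h1]
  rw [← Fintype.prod_sum
      (fun v (x : Bool) => (if a v && x then (-1 : ℝ) else 1) *
        (if c v && x then (-1 : ℝ) else 1))]
  have h2 : ∀ v : Fin d, (∑ x : Bool, (if a v && x then (-1 : ℝ) else 1) *
      (if c v && x then (-1 : ℝ) else 1)) = if a v = c v then 2 else 0 := by
    intro v
    cases ha : a v <;> cases hc : c v <;> simp [Fintype.sum_bool] <;> norm_num
  rw [Finset.prod_congr rfl (fun v _ => h2 v)]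
  by_cases h : a = c
  · subst h; simp
  · rw [if_neg h]
    obtain ⟨v, hv⟩ : ∃ v, a v ≠ c v := by
      by_contra hc; push_neg at hc; exact h (funext hc)
    exact Finset.prod_eq_zero (Finset.mem_univ v) (if_neg hv)

lemma inversion {d : ℕ} (p : (Fin d → Bool) → ℝ) (a : Fin d → Bool) :
    ∑ b : Fin d → Bool, sgn a b * (∑ c : Fin d → Bool, sgn c b * p c)
      = (2 : ℝ) ^ d * p a := by
  have : ∀ b : Fin d → Bool, sgn a b * (∑ c : Fin d → Bool, sgn c b * p c)
      = ∑ c : Fin d → Bool, (sgn a b * sgn c b) * p c := by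
    intro b; rw [Finset.mul_sum]; ring_nf
  simp only [this]
  rw [Finset.sum_comm]
  have : ∀ c : Fin d → Bool,
      ∑ b : Fin d → Bool, (sgn a b * sgn c b) * p c
        = (if a = c then (2 : ℝ) ^ d else 0) * p c := by
    intro c; rw [← Finset.sum_mul, sgn_orth]
  simp only [this]
  simp

theorem palindromic_iff_odd_moment_interactions_vanish {d : ℕ}
    (p : (Fin d → Bool) → ℝ)
    (hnonneg : ∀ a, 0 ≤ p a)
    (hsum : ∑ a : Fin d → Bool, p a = 1) :
    (∀ a, p a = p (bcompl a)) ↔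
      (∀ b : Fin d → Bool, Odd (wt b) → ∑ a : Fin d → Bool, sgn a b * p a = 0) := by
  constructor
  · intro hpal b hodd
    have e : Function.Involutive (bcompl (d := d)) := bcompl_bcompl
    have h1 : ∑ a : Fin d → Bool, sgn a b * p a
        = ∑ a : Fin d → Bool, sgn (bcompl a) b * p (bcompl a) :=
      (Fintype.sum_equiv e.toPerm _ _ (fun a => by
        simp [Function.Involutive.toPerm])).symm
    have h2 : ∑ a : Fin d → Bool, sgn (bcompl a) b * p (bcompl a)
        = - ∑ a : Fin d → Bool, sgn a b * p a := by
      rw [← Finset.sum_neg_distrib]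
      apply Finset.sum_congr rfl
      intro a _
      rw [sgn_bcompl, ← hpal a, hodd.neg_one_pow]
      ring
    have := h1.trans h2
    linarith
  · intro h a
    have key : ∑ b : Fin d → Bool,
        (sgn a b - sgn (bcompl a) b) * (∑ c : Fin d → Bool, sgn c b * p c) = 0 := by
      apply Finset.sum_eq_zero
      intro b _
      by_cases hb : Odd (wt b)
      · rw [h b hb, mul_zero]
      · have : (-1 : ℝ) ^ (wt b) = 1 := by
          rw [Nat.not_odd_iff_even] at hb; exact hb.neg_one_pow
        rw [sgn_bcompl, this, one_mul, sub_self, zero_mul]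
    have expand : ∑ b : Fin d → Bool,
        (sgn a b - sgn (bcompl a) b) * (∑ c : Fin d → Bool, sgn c b * p c)
        = (2 : ℝ) ^ d * p a - (2 : ℝ) ^ d * p (bcompl a) := by
      rw [← inversion p a, ← inversion p (bcompl a), ← Finset.sum_sub_distrib]
      apply Finset.sum_congr rfl
      intro b _; ring
    rw [expand] at key
    have h2 : (0:ℝ) < (2 : ℝ) ^ d := by positivity
    have := sub_eq_zero.mp key
    exact mul_left_cancel₀ (ne_of_gt h2) this
end

section
/- If a binary distribution on {0,1}^d is generated by a linear triangular system — Pr(A_1 = 0) = 1/2 and Pr(A_s = a_s | A_1 = a_1,...,A_{s-1} = a_{s-1}) = (1/2)(1 + Σ_{j<s} β_{sj} (-1)^{a_s + a_j}) for s = 2,...,d — then the joint distribution is palindromic, i.e., p(a) = p(~a) for all a. -/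
open Finset

/-- A binary distribution generated by a linear triangular system with uniform margins
and main-effect linear regressions is palindromic. -/
theorem triangular_system_is_palindromic {d : ℕ}
    (p : (Fin d → Bool) → ℝ)
    (β : Fin d → Fin d → ℝ)
    (hp : ∀ a : Fin d → Bool,
      p a = ∏ s : Fin d,
        (if (s : ℕ) = 0 then (1 / 2 : ℝ)
         else (1 / 2) * (1 + ∑ j ∈ univ.filter (fun j => j < s),
            β s j * (if a s = a j then 1 else -1))))
    (hprob : ∀ a : Fin d → Bool, ∀ s : Fin d,
      0 ≤ 1 + ∑ j ∈ univ.filter (fun j => j < s), β s j * (if a s = a j then 1 else -1) ∧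
      (1 + ∑ j ∈ univ.filter (fun j => j < s), β s j * (if a s = a j then 1 else -1)) ≤ 2) :
    ∀ a : Fin d → Bool, p a = p (bcompl a) := by
  intro a
  rw [hp, hp]
  refine Finset.prod_congr rfl fun s _ => ?_
  simp [bcompl]
end

section
/- In a trivariate palindromic Bernoulli distribution with strictly positive probabilities (cells parametrized by α = p(0,0,0) = p(1,1,1), β = p(1,0,0) = p(0,1,1), γ = p(0,1,0) = p(1,0,1), δ = p(1,1,0) = p(0,0,1)), the variables A_1 and A_2 are conditionally independent given A_3 if and only if αδ = βγ. -/
/-- The trivariate palindromic table with parameters α, β, γ, δ: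
`q i j k` is the probability of cell `(i,j,k)` (false = 0, true = 1). -/
def q (α β γ δ : ℝ) : Bool → Bool → Bool → ℝ
  | false, false, false => α
  | true,  false, false => β
  | false, true,  false => γ
  | true,  true,  false => δ
  | false, false, true  => δ
  | true,  false, true  => γ
  | false, true,  true  => β
  | true,  true,  true  => α

theorem trivariate_palindromic_CI_iff (α β γ δ : ℝ)
    (hα : 0 < α) (hβ : 0 < β) (hγ : 0 < γ) (hδ : 0 < δ)
    (hsum : 2 * (α + β + γ + δ) = 1) :
    (∀ i j k : Bool,
        q α β γ δ i j k * (∑ i' : Bool, ∑ j' : Bool, q α β γ δ i' j' k) =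
          (∑ j' : Bool, q α β γ δ i j' k) * (∑ i' : Bool, q α β γ δ i' j k)) ↔
      α * δ = β * γ := by
  constructor
  · intro h
    have h0 := h false false false
    simp [q, Fin.sum_univ_succ] at h0
    nlinarith [h0]
  · intro h i j k
    cases i <;> cases j <;> cases k <;> simp [q, Fin.sum_univ_succ] <;> nlinarith [h]
end

section
/- In a trivariate palindromic Bernoulli distribution with A_1 ⊥ A_2 | A_3 (i.e., αδ = βγ), the cell probabilities are given in product form: α = (1+ρ_{13})(1+ρ_{23})/8, β = (1−ρ_{13})(1+ρ_{23})/8, γ = (1+ρ_{13})(1−ρ_{23})/8, δ = (1−ρ_{13})(1−ρ_{23})/8, where ρ_{13} = 4α + 4γ − 1 and ρ_{23} = 4α + 4β − 1. -/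
/-- In a positive trivariate palindromic Bernoulli distribution
(α = p(000) = p(111), β = p(100) = p(011), γ = p(010) = p(101), δ = p(110) = p(001))
with A₁ ⊥ A₂ | A₃ (i.e. αδ = βγ), the cells factor in product form in terms of the
correlations ρ₁₃ = 4α + 4γ − 1 and ρ₂₃ = 4α + 4β − 1. -/
theorem trivariate_palindromic_CI_product_form (α β γ δ : ℝ)
    (hα : 0 < α) (hβ : 0 < β) (hγ : 0 < γ) (hδ : 0 < δ)
    (hsum : 2 * (α + β + γ + δ) = 1)
    (hCI : α * δ = β * γ) :
    α = (1 + (4 * α + 4 * γ - 1)) * (1 + (4 * α + 4 * β - 1)) / 8 ∧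
    β = (1 - (4 * α + 4 * γ - 1)) * (1 + (4 * α + 4 * β - 1)) / 8 ∧
    γ = (1 + (4 * α + 4 * γ - 1)) * (1 - (4 * α + 4 * β - 1)) / 8 ∧
    δ = (1 - (4 * α + 4 * γ - 1)) * (1 - (4 * α + 4 * β - 1)) / 8 := by
  refine ⟨?_, ?_, ?_, ?_⟩ <;> nlinarith [hsum, hCI, sq_nonneg (α+β+γ+δ)]
end
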